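/- arXiv:2012.01847 — 3 statements merged into one kernel-verified Lean document; each statement's English description precedes it below -/
import Mathlib

section
/- (Abstract soundness) Let U be a confluent binary relation on a type α with a normal-form function nf, and let T be a binary relation satisfying the diamond property with respect to U: whenever T c d and U c e, there exists f with U d f and T e f. If there exist c' and d' with EqvGen U c c', T c' d', and EqvGen U d' d, then there exists e with T (nf c) e and ReflTransGen U e (nf d). -/
/-!
Since `c'` is `U`-convertible to `c`, it reduces to `nf c`: confluence turns convertibility into
joinability, and anything joinable with a normal form reduces to it. The diamond property carries
the `T`-step `c' → d'` along that reduction to a step `nf c → e` with `d' →* e`; then `e` is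
`U`-convertible to `d`, so by the same argument it reduces to `nf d`.
-/

open Relation

section

variable {α : Type*} {U T : α → α → Prop} {a b c d e : α}

theorem Relation.EqvGen.join_reflTransGen_of_confluent
    (hconf : ∀ a b c, ReflTransGen U a b → ReflTransGen U a c → Join (ReflTransGen U) b c)
    (h : EqvGen U a b) : Join (ReflTransGen U) a b :=
  haveI := (equivalence_join hconf).isEquiv
  EqvGen.eqvGen_le (fun _ y hxy => ⟨y, .single hxy, .refl⟩) a b h

theorem Relation.ReflTransGen.eq_of_normal (hnormal : ¬ ∃ b, U a b)
    (h : ReflTransGen U a b) : b = a := by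
  rcases h.cases_head with rfl | ⟨c, hac, -⟩
  · rfl
  · exact absurd ⟨c, hac⟩ hnormal

theorem Relation.EqvGen.reflTransGen_nf {nf : α → α}
    (hconf : ∀ a b c, ReflTransGen U a b → ReflTransGen U a c → Join (ReflTransGen U) b c)
    (hnf_reach : ∀ c, ReflTransGen U c (nf c)) (hnf_normal : ∀ c, ¬ ∃ d, U (nf c) d)
    (h : EqvGen U a b) : ReflTransGen U a (nf b) := by
  have hconv : EqvGen U a (nf b) := h.trans _ _ _ (reflTransGen_le_eqvGen _ _ _ (hnf_reach b))
  obtain ⟨e, hae, hnfe⟩ := hconv.join_reflTransGen_of_confluent hconf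
  rwa [hnfe.eq_of_normal (hnf_normal b)] at hae

theorem Relation.ReflTransGen.exists_diamond
    (hdiamond : ∀ c d e, T c d → U c e → ∃ f, U d f ∧ T e f)
    (hT : T c d) (h : ReflTransGen U c e) : ∃ f, ReflTransGen U d f ∧ T e f := by
  induction h with
  | refl => exact ⟨d, .refl, hT⟩
  | tail _ hstep ih =>
    obtain ⟨f, hdf, hTf⟩ := ih
    obtain ⟨g, hfg, hTg⟩ := hdiamond _ _ _ hTf hstep
    exact ⟨g, hdf.tail hfg, hTg⟩

end

/-- Abstract soundness: a `T`-step modulo `U` can be implemented by a `T`-step on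
`U`-normal forms followed by `U`-renormalisation. -/
theorem abstract_soundness {α : Type*} (U T : α → α → Prop) (nf : α → α)
    (hconf : ∀ a b c, Relation.ReflTransGen U a b → Relation.ReflTransGen U a c →
      ∃ e, Relation.ReflTransGen U b e ∧ Relation.ReflTransGen U c e)
    (hnf_reach : ∀ c, Relation.ReflTransGen U c (nf c))
    (hnf_normal : ∀ c, ¬ ∃ d, U (nf c) d)
    (hdiamond : ∀ c d e, T c d → U c e → ∃ f, U d f ∧ T e f) :
    ∀ c d, (∃ c' d', Relation.EqvGen U c c' ∧ T c' d' ∧ Relation.EqvGen U d' d) →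
      ∃ e, T (nf c) e ∧ Relation.ReflTransGen U e (nf d) := by
  rintro c d ⟨c', d', hcc', hT, hd'd⟩
  have hc'nf : ReflTransGen U c' (nf c) :=
    (EqvGen.symm _ _ hcc').reflTransGen_nf hconf hnf_reach hnf_normal
  obtain ⟨e, hd'e, hTe⟩ := hc'nf.exists_diamond hdiamond hT
  have hed : EqvGen U e d :=
    (EqvGen.symm _ _ (EqvGen.reflTransGen_le_eqvGen _ _ _ hd'e)).trans _ _ _ hd'd
  exact ⟨e, hTe, hed.reflTransGen_nf hconf hnf_reach hnf_normal⟩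
end

section
/- (Abstract adequacy) Let U be a confluent binary relation on a type α with a normal-form function nf, let T satisfy the diamond property with respect to U (whenever T c d and U c e, there exists f with U d f and T e f), and let R be a binary relation such that for all a, b: (a rewrites by R modulo U to b) if and only if (a rewrites by T modulo U to b). Then for all c, d: c rewrites by R modulo U to d if and only if there exists e with T (nf c) e and ReflTransGen U e (nf d). -/
/-!
Under confluence, `EqvGen U`-equivalent elements have the same `U`-normal form. A `T`-step
out of `c'` can be pushed along `c' →* nf c'` by the diamond property, so every rewrite by
`T` modulo `U` becomes a `T`-step out of `nf c` followed by `U`-steps to `nf d`.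
-/

/-- `c` rewrites by `R` modulo `U` to `d`. -/
def RewModulo {α : Type*} (R U : α → α → Prop) (c d : α) : Prop :=
  ∃ c' d', Relation.EqvGen U c c' ∧ R c' d' ∧ Relation.EqvGen U d' d

namespace Relation

variable {α : Type*} {U T : α → α → Prop}

theorem ReflTransGen.eq_of_not_exists_rel {n x : α} (h : ReflTransGen U n x)
    (hn : ¬ ∃ d, U n d) : x = n :=
  (h.cases_head.resolve_right fun ⟨d, hnd, _⟩ => hn ⟨d, hnd⟩).symm

theorem join_reflTransGen_of_eqvGen
    (hconf : ∀ a b c, ReflTransGen U a b → ReflTransGen U a c → Join (ReflTransGen U) b c)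
    {a b : α} (h : EqvGen U a b) : Join (ReflTransGen U) a b :=
  (equivalence_join hconf).eqvGen_iff.1
    (EqvGen.eqvGen_mono (fun _ b hab => ⟨b, .single hab, .refl⟩) _ _ h)

theorem eq_of_eqvGen_of_normalForm {nf : α → α}
    (hconf : ∀ a b c, ReflTransGen U a b → ReflTransGen U a c → Join (ReflTransGen U) b c)
    (hnf_reach : ∀ c, ReflTransGen U c (nf c)) (hnf_normal : ∀ c, ¬ ∃ d, U (nf c) d)
    {a b : α} (h : EqvGen U a b) : nf a = nf b := by
  have hnf_eqv : ∀ c, EqvGen U c (nf c) := fun c =>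
    EqvGen.reflTransGen_le_eqvGen U _ _ (hnf_reach c)
  obtain ⟨e, hae, hbe⟩ := join_reflTransGen_of_eqvGen hconf
    (((hnf_eqv a).symm _ _).trans _ _ _ (h.trans _ _ _ (hnf_eqv b)))
  exact (hae.eq_of_not_exists_rel (hnf_normal a)).symm.trans
    (hbe.eq_of_not_exists_rel (hnf_normal b))

theorem ReflTransGen.strip (hdiamond : ∀ c d e, T c d → U c e → ∃ f, U d f ∧ T e f)
    {c d c' : α} (hT : T c d) (hU : ReflTransGen U c c') :
    ∃ f, T c' f ∧ ReflTransGen U d f := by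
  induction hU with
  | refl => exact ⟨d, hT, .refl⟩
  | tail _ hbc ih =>
    obtain ⟨f, hTf, hdf⟩ := ih
    obtain ⟨g, hfg, hTg⟩ := hdiamond _ _ _ hTf hbc
    exact ⟨g, hTg, hdf.tail hfg⟩

theorem rewModulo_iff_exists_of_normalForm {nf : α → α}
    (hconf : ∀ a b c, ReflTransGen U a b → ReflTransGen U a c → Join (ReflTransGen U) b c)
    (hnf_reach : ∀ c, ReflTransGen U c (nf c)) (hnf_normal : ∀ c, ¬ ∃ d, U (nf c) d)
    (hdiamond : ∀ c d e, T c d → U c e → ∃ f, U d f ∧ T e f) (c d : α) :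
    RewModulo T U c d ↔ ∃ e, T (nf c) e ∧ ReflTransGen U e (nf d) := by
  have hnf_eq := @eq_of_eqvGen_of_normalForm _ _ nf hconf hnf_reach hnf_normal
  have hrtg_eqv : ∀ {a b}, ReflTransGen U a b → EqvGen U a b :=
    fun h => EqvGen.reflTransGen_le_eqvGen U _ _ h
  constructor
  · rintro ⟨c', d', hcc', hT, hd'd⟩
    obtain ⟨e, hTe, hd'e⟩ := ReflTransGen.strip hdiamond hT (hnf_reach c')
    have hnf_e : nf e = nf d := (hnf_eq ((hrtg_eqv hd'e).symm _ _)).trans (hnf_eq hd'd)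
    exact ⟨e, hnf_eq hcc' ▸ hTe, hnf_e ▸ hnf_reach e⟩
  · rintro ⟨e, hTe, hed⟩
    exact ⟨nf c, e, hrtg_eqv (hnf_reach c), hTe,
      (hrtg_eqv hed).trans _ _ _ ((hrtg_eqv (hnf_reach d)).symm _ _)⟩

end Relation

/-- Abstract adequacy: rewriting by `R` modulo `U` is equivalent to applying the
transformed system `T` on `U`-normal forms and then renormalising by `U`. -/
theorem abstract_adequacy {α : Type*} (U T R : α → α → Prop) (nf : α → α)
    (hconf : ∀ a b c, Relation.ReflTransGen U a b → Relation.ReflTransGen U a c →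
      ∃ e, Relation.ReflTransGen U b e ∧ Relation.ReflTransGen U c e)
    (hnf_reach : ∀ c, Relation.ReflTransGen U c (nf c))
    (hnf_normal : ∀ c, ¬ ∃ d, U (nf c) d)
    (hdiamond : ∀ c d e, T c d → U c e → ∃ f, U d f ∧ T e f)
    (hequiv : ∀ a b, RewModulo R U a b ↔ RewModulo T U a b) :
    ∀ c d, RewModulo R U c d ↔ ∃ e, T (nf c) e ∧ Relation.ReflTransGen U e (nf d) :=
  fun c d => (hequiv c d).trans
    (Relation.rewModulo_iff_exists_of_normalForm hconf hnf_reach hnf_normal hdiamond c d)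
end

section
/- (Abstract completeness on normal forms) Let U be a binary relation on a type α with a normal-form function nf, and let T satisfy the diamond property with respect to U (whenever T c d and U c e, there exists f with U d f and T e f). Suppose R is a binary relation such that whenever T c d, c rewrites by R modulo U to d. Then whenever T c d holds, there exists e with T (nf c) e, and nf c rewrites by R modulo U to e; hence c rewrites by R modulo U to a U-equivalent of d. -/
namespace Relation.ReflTransGen

theorem strip_s8 {α : Type*} {U T : α → α → Prop}
    (hdiamond : ∀ c d e, T c d → U c e → ∃ f, U d f ∧ T e f)
    {c c' d : α} (hcc' : ReflTransGen U c c') (hcd : T c d) :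
    ∃ e, T c' e ∧ ReflTransGen U d e := by
  induction hcc' with
  | refl => exact ⟨d, hcd, .refl⟩
  | tail _ hstep ih =>
    obtain ⟨e, hTe, hde⟩ := ih
    obtain ⟨f, hef, hTf⟩ := hdiamond _ _ _ hTe hstep
    exact ⟨f, hTf, hde.tail hef⟩

end Relation.ReflTransGen

theorem abstract_completeness_nf_general {α : Type*} (U T R : α → α → Prop) (nf : α → α)
    (hnf_reach : ∀ c, Relation.ReflTransGen U c (nf c))
    (hdiamond : ∀ c d e, T c d → U c e → ∃ f, U d f ∧ T e f)
    (hTR : ∀ c d, T c d → RewModulo R U c d) :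
    ∀ c d, T c d →
      ∃ e, T (nf c) e ∧ RewModulo R U (nf c) e ∧ Relation.EqvGen U e d := by
  intro c d hcd
  obtain ⟨e, he, hde⟩ := (hnf_reach c).strip_s8 hdiamond hcd
  exact ⟨e, he, hTR _ _ he, (Relation.EqvGen.reflTransGen_le_eqvGen U _ _ hde).symm⟩

/-- Abstract completeness on normal forms: `T`-redexes survive `U`-normalisation and
every `T`-step is an `R`-step modulo `U`, so a `T`-step from `c` gives an `R`-step modulo `U`
from `nf c` to some `e` that is `U`-equivalent to `d`. -/
theorem abstract_completeness_nf {α : Type*} (U T R : α → α → Prop) (nf : α → α)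
    (hnf_reach : ∀ c, Relation.ReflTransGen U c (nf c))
    (hnf_normal : ∀ c, ¬ ∃ d, U (nf c) d)
    (hdiamond : ∀ c d e, T c d → U c e → ∃ f, U d f ∧ T e f)
    (hTR : ∀ c d, T c d → RewModulo R U c d) :
    ∀ c d, T c d →
      ∃ e, T (nf c) e ∧ RewModulo R U (nf c) e ∧ Relation.EqvGen U e d :=
  abstract_completeness_nf_general U T R nf hnf_reach hdiamond hTR
end
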